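/- arXiv:2501.05169 — 2 statements merged into one kernel-verified Lean document; each statement's English description precedes it below -/
import Mathlib

section
/- Let (N, K, v) be an incomplete cooperative game with K intersection-closed and N ∈ K. Then the unique δ-system for (N, K, v) is given explicitly by δ(S) = Δ_v(c_K(S)) / |C(c_K(S))| for every S ⊆ N, where Δ_v : K → ℝ is defined recursively by Δ_v(S) = v(S) − Σ_{T ∈ K, T ⊊ S} Δ_v(T). -/
open Finset

variable {α : Type*} [Fintype α] [DecidableEq α]

/-- A set system is intersection-closed if it is closed under pairwise intersections. -/
def InterClosed (K : Finset (Finset α)) : Prop :=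
  ∀ S ∈ K, ∀ T ∈ K, S ∩ T ∈ K

/-- The closure `c_K(T) = ⋂ {S ∈ K : T ⊆ S}` of a coalition `T` in the set system `K`. -/
def cl (K : Finset (Finset α)) (T : Finset α) : Finset α :=
  (K.filter fun S => T ⊆ S).inf id

/-- The family `C(T)` of coalitions indistinguishable from `T`. -/
def classOf (K : Finset (Finset α)) (T : Finset α) : Finset (Finset α) :=
  Finset.univ.filter fun X => cl K X = cl K T

/-- The Harsanyi dividend `d_w(S) = w S - ∑_{T ⊊ S} d_w(T)`. -/
noncomputable def dividend (w : Finset α → ℝ) (S : Finset α) : ℝ :=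
  w S - ∑ T ∈ (S.powerset.erase S).attach, dividend w T.1
termination_by S.card
decreasing_by
  have h := T.2
  simp only [mem_erase, mem_powerset] at h
  exact Finset.card_lt_card (h.2.ssubset_of_ne h.1)

/-- The surplus `Δ_v(S) = v S - ∑_{T ∈ K, T ⊊ S} Δ_v(T)` for `S ∈ K`. -/
noncomputable def Delta (K : Finset (Finset α)) (v : Finset α → ℝ) (S : Finset α) : ℝ :=
  v S - ∑ T ∈ (K.filter fun T => T ⊂ S).attach, Delta K v T.1
termination_by S.card
decreasing_by
  have h := T.2
  simp only [mem_filter] at h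
  exact Finset.card_lt_card h.2

/-- A δ-system for the incomplete game `(N, K, v)`. -/
def IsDeltaSystem (K : Finset (Finset α)) (v δ : Finset α → ℝ) : Prop :=
  (∀ S ∈ K, ∑ T ∈ S.powerset, δ T = v S) ∧
  ∀ S T : Finset α, cl K S = cl K T → δ S = δ T

/-- The payoff `Φ_i = ∑_{S ∋ i} δ(S)/|S|` computed from a dividend function `δ`. -/
noncomputable def UDofDelta (δ : Finset α → ℝ) (i : α) : ℝ :=
  ∑ S ∈ Finset.univ.filter (fun S => i ∈ S), δ S / S.card

/-- The complete game whose Harsanyi dividends are `δ`. -/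
def gameOf (δ : Finset α → ℝ) (S : Finset α) : ℝ := ∑ T ∈ S.powerset, δ T

/-- A P-extension: a positive cooperative game agreeing with `v` on `K`. -/
def PExtension (K : Finset (Finset α)) (v w : Finset α → ℝ) : Prop :=
  w ∅ = 0 ∧ (∀ S, 0 ≤ dividend w S) ∧ ∀ S ∈ K, w S = v S

/-- P-extendability of an incomplete game. -/
def PExtendable (K : Finset (Finset α)) (v : Finset α → ℝ) : Prop :=
  ∃ w, PExtension K v w

/-- The Shapley value `φ_i(w) = ∑_{S ∋ i} d_w(S)/|S|`. -/
noncomputable def shapley (w : Finset α → ℝ) (i : α) : ℝ :=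
  ∑ S ∈ Finset.univ.filter (fun S => i ∈ S), dividend w S / S.card

section Aux

variable (K : Finset (Finset α))

lemma my_subset_cl (T : Finset α) : T ⊆ cl K T := by
  have h : T ≤ (K.filter fun S => T ⊆ S).inf id :=
    Finset.le_inf fun S hS => (Finset.mem_filter.mp hS).2
  exact h

lemma my_cl_subset {S T : Finset α} (hS : S ∈ K) (hTS : T ⊆ S) : cl K T ⊆ S := by
  have h : (K.filter fun X => T ⊆ X).inf id ≤ id S :=
    Finset.inf_le (Finset.mem_filter.mpr ⟨hS, hTS⟩)
  exact h

lemma my_inf_mem (hIC : InterClosed K) (s : Finset (Finset α)) :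
    s.Nonempty → s ⊆ K → s.inf id ∈ K := by
  induction s using Finset.induction_on with
  | empty => rintro ⟨x, hx⟩; simp at hx
  | @insert a s ha ih =>
    intro _ hsub
    rcases s.eq_empty_or_nonempty with h | h
    · subst h; simpa using hsub (by simp)
    · rw [Finset.inf_insert]
      exact hIC a (hsub (by simp)) _ (ih h (fun x hx => hsub (by simp [hx])))

lemma my_cl_mem (hIC : InterClosed K) (hN : (Finset.univ : Finset α) ∈ K)
    (T : Finset α) : cl K T ∈ K := by
  apply my_inf_mem K hIC
  · exact ⟨Finset.univ, by simp [Finset.mem_filter, hN]⟩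
  · exact Finset.filter_subset _ _

lemma my_cl_eq_self (hIC : InterClosed K) (hN : (Finset.univ : Finset α) ∈ K)
    {S : Finset α} (hS : S ∈ K) : cl K S = S :=
  Finset.Subset.antisymm (my_cl_subset K hS Finset.Subset.rfl) (my_subset_cl K S)

lemma my_cl_idem (hIC : InterClosed K) (hN : (Finset.univ : Finset α) ∈ K)
    (T : Finset α) : cl K (cl K T) = cl K T :=
  my_cl_eq_self K hIC hN (my_cl_mem K hIC hN T)

lemma my_classOf_card_pos (R : Finset α) : 0 < ((classOf K R).card : ℝ) := by
  have : R ∈ classOf K R := by simp [classOf]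
  exact_mod_cast Finset.card_pos.mpr ⟨R, this⟩

lemma my_fiber_eq (hIC : InterClosed K) (hN : (Finset.univ : Finset α) ∈ K)
    {R S : Finset α} (hR : R ∈ K) (hRS : R ⊆ S) :
    S.powerset.filter (fun T => cl K T = R) = classOf K R := by
  ext T
  simp only [Finset.mem_filter, Finset.mem_powerset, classOf, Finset.mem_univ, true_and,
    my_cl_eq_self K hIC hN hR]
  constructor
  · exact fun h => h.2
  · intro h
    exact ⟨(my_subset_cl K T).trans (h ▸ hRS), h⟩

lemma my_sum_powerset (hIC : InterClosed K) (hN : (Finset.univ : Finset α) ∈ K)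
    (f : Finset α → ℝ) (hf : ∀ T, f T = f (cl K T)) {S : Finset α} (hS : S ∈ K) :
    ∑ T ∈ S.powerset, f T
      = ∑ R ∈ K.filter (fun R => R ⊆ S), ((classOf K R).card : ℝ) * f R := by
  rw [← Finset.sum_fiberwise_of_maps_to (g := cl K)
    (t := K.filter (fun R => R ⊆ S)) (fun T hT => by
      simp only [Finset.mem_powerset] at hT
      simp [Finset.mem_filter, my_cl_mem K hIC hN, my_cl_subset K hS hT]) f]
  refine Finset.sum_congr rfl fun R hR => ?_
  simp only [Finset.mem_filter] at hR
  rw [my_fiber_eq K hIC hN hR.1 hR.2]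
  rw [Finset.sum_congr rfl (fun T hT => ?_), Finset.sum_const, nsmul_eq_mul]
  have hT' : cl K T = cl K R := by
    simp only [classOf, Finset.mem_filter] at hT
    exact hT.2
  rw [hf T, hT', ← hf R]

lemma my_filter_split {S : Finset α} (hS : S ∈ K) :
    K.filter (fun R => R ⊆ S) = insert S (K.filter (fun R => R ⊂ S)) := by
  ext R
  simp only [Finset.mem_filter, Finset.mem_insert]
  constructor
  · rintro ⟨hR, hsub⟩
    rcases lt_or_eq_of_le (hsub : R ≤ S) with h | h
    · exact Or.inr ⟨hR, h⟩
    · exact Or.inl h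
  · rintro (rfl | ⟨hR, h⟩)
    · exact ⟨hS, Finset.Subset.rfl⟩
    · exact ⟨hR, h.subset⟩

lemma my_sum_Delta (v : Finset α → ℝ) {S : Finset α} (hS : S ∈ K) :
    ∑ R ∈ K.filter (fun R => R ⊆ S), Delta K v R = v S := by
  rw [my_filter_split K hS, Finset.sum_insert (by simp [Finset.mem_filter]),
    Delta, Finset.sum_attach]
  ring

end Aux

/-- the unique δ-system is given explicitly by
`δ(S) = Δ_v(c_K(S)) / |C(c_K(S))|`. -/
theorem deltaSystem_explicit (K : Finset (Finset α))
    (hIC : InterClosed K) (hempty : ∅ ∈ K) (hN : (Finset.univ : Finset α) ∈ K)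
    (v : Finset α → ℝ) (hv : v ∅ = 0) :
    IsDeltaSystem K v
        (fun S => Delta K v (cl K S) / ((classOf K (cl K S)).card : ℝ)) ∧
      ∀ δ : Finset α → ℝ, IsDeltaSystem K v δ →
        ∀ S : Finset α, δ S = Delta K v (cl K S) / ((classOf K (cl K S)).card : ℝ) := by
  set f : Finset α → ℝ :=
    fun S => Delta K v (cl K S) / ((classOf K (cl K S)).card : ℝ) with hfdef
  have hf : ∀ T, f T = f (cl K T) := by
    intro T; simp only [hfdef, my_cl_idem K hIC hN]
  constructor
  · constructor
    · intro S hS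
      rw [my_sum_powerset K hIC hN f hf hS, ← my_sum_Delta K v hS]
      refine Finset.sum_congr rfl fun R hR => ?_
      simp only [Finset.mem_filter] at hR
      simp only [hfdef, my_cl_eq_self K hIC hN hR.1]
      exact mul_div_cancel₀ _ (ne_of_gt (my_classOf_card_pos K R))
    · intro S T h
      simp only [hfdef, h]
  · rintro δ ⟨hδ1, hδ2⟩ S
    have hfδ : ∀ T, δ T = δ (cl K T) :=
      fun T => hδ2 T (cl K T) (my_cl_idem K hIC hN T).symm
    have main : ∀ S : Finset α, S ∈ K →
        δ S = Delta K v S / ((classOf K S).card : ℝ) := by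
      intro S
      induction S using Finset.strongInduction with
      | _ S ih =>
        intro hS
        have hsum := hδ1 S hS
        rw [my_sum_powerset K hIC hN δ hfδ hS, my_filter_split K hS,
          Finset.sum_insert (by simp [Finset.mem_filter])] at hsum
        have hrepl : ∑ R ∈ K.filter (fun R => R ⊂ S), ((classOf K R).card : ℝ) * δ R
            = ∑ R ∈ K.filter (fun R => R ⊂ S), Delta K v R := by
          refine Finset.sum_congr rfl fun R hR => ?_
          simp only [Finset.mem_filter] at hR
          rw [ih R hR.2 hR.1]
          exact mul_div_cancel₀ _ (ne_of_gt (my_classOf_card_pos K R))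
        rw [hrepl] at hsum
        have hDelta : Delta K v S
            = v S - ∑ R ∈ K.filter (fun R => R ⊂ S), Delta K v R := by
          rw [Delta, Finset.sum_attach]
        have hcard := ne_of_gt (my_classOf_card_pos K S)
        field_simp
        rw [mul_comm, hDelta, ← hsum]
        ring
    rw [hfδ S, main (cl K S) (my_cl_mem K hIC hN S)]
end

section
/- Let (N, K, v) be a P-extendable incomplete cooperative game with K intersection-closed and N ∈ K. Then a cooperative game w on N is a P-extension of (N, K, v) if and only if d_w(T) ≥ 0 for every T ⊆ N and, for every S ∈ K, Σ_{T ∈ C(S)} d_w(T) = Δ_v(S), where Δ_v : K → ℝ is defined recursively by Δ_v(S) = v(S) − Σ_{T ∈ K, T ⊊ S} Δ_v(T). -/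
open Finset

variable {α : Type*} [Fintype α] [DecidableEq α]

section AuxLemmas

omit [Fintype α] in
lemma sum_powerset_dividend (w : Finset α → ℝ) (S : Finset α) :
    ∑ T ∈ S.powerset, dividend w T = w S := by
  have h : dividend w S = w S - ∑ T ∈ (S.powerset.erase S).attach, dividend w T.1 := by
    rw [dividend]
  rw [Finset.sum_attach] at h
  rw [← insert_erase (mem_powerset_self S), sum_insert (notMem_erase _ _), h]
  ring

lemma subset_cl (K : Finset (Finset α)) (T : Finset α) : T ⊆ cl K T := by
  unfold cl
  exact Finset.le_inf (f := (id : Finset α → Finset α)) fun S hS => (mem_filter.mp hS).2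

lemma cl_subset (K : Finset (Finset α)) {S T : Finset α} (hS : S ∈ K) (h : T ⊆ S) :
    cl K T ⊆ S := by
  unfold cl
  exact Finset.inf_le (f := id) (mem_filter.mpr ⟨hS, h⟩)

lemma cl_mem (K : Finset (Finset α)) (hIC : InterClosed K)
    (hN : (univ : Finset α) ∈ K) (T : Finset α) : cl K T ∈ K := by
  have hne : (K.filter fun S => T ⊆ S).Nonempty :=
    ⟨univ, mem_filter.mpr ⟨hN, subset_univ T⟩⟩
  have : cl K T = (K.filter fun S => T ⊆ S).inf' hne id := (Finset.inf'_eq_inf hne id).symm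
  rw [this]
  exact Finset.inf'_mem (↑K : Set (Finset α))
    (fun x hx y hy => hIC x hx y hy) _ hne id (fun i hi => (mem_filter.mp hi).1)

lemma cl_eq_self (K : Finset (Finset α)) {S : Finset α} (hS : S ∈ K) : cl K S = S :=
  Finset.Subset.antisymm (cl_subset K hS Finset.Subset.rfl) (subset_cl K S)

omit [Fintype α] in
lemma filter_subset_eq_insert (K : Finset (Finset α)) {S : Finset α} (hS : S ∈ K) :
    K.filter (fun T => T ⊆ S) = insert S (K.filter fun T => T ⊂ S) := by
  ext T
  simp only [mem_filter, mem_insert]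
  constructor
  · rintro ⟨hT, hTS⟩
    rcases hTS.ssubset_or_eq with h | h
    · exact Or.inr ⟨hT, h⟩
    · exact Or.inl h
  · rintro (rfl | ⟨hT, hTS⟩)
    · exact ⟨hS, Finset.Subset.rfl⟩
    · exact ⟨hT, hTS.subset⟩

omit [Fintype α] in
lemma sum_Delta (K : Finset (Finset α)) (v : Finset α → ℝ) {S : Finset α} (hS : S ∈ K) :
    ∑ R ∈ K.filter (fun T => T ⊆ S), Delta K v R = v S := by
  have h : Delta K v S = v S - ∑ T ∈ (K.filter fun T => T ⊂ S).attach, Delta K v T.1 := by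
    rw [Delta]
  rw [Finset.sum_attach] at h
  rw [filter_subset_eq_insert K hS, sum_insert (by simp [ssubset_irrefl]), h]
  ring

lemma powerset_eq_biUnion (K : Finset (Finset α)) (hIC : InterClosed K)
    (hN : (univ : Finset α) ∈ K) {S : Finset α} (hS : S ∈ K) :
    S.powerset = (K.filter (fun T => T ⊆ S)).biUnion (classOf K) := by
  ext T
  simp only [mem_powerset, mem_biUnion, mem_filter, classOf, mem_univ, true_and]
  constructor
  · intro h
    exact ⟨cl K T, ⟨cl_mem K hIC hN T, cl_subset K hS h⟩,
      (cl_eq_self K (cl_mem K hIC hN T)).symm⟩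
  · rintro ⟨R, ⟨hR, hRS⟩, hclT⟩
    exact (subset_cl K T).trans (by rw [hclT, cl_eq_self K hR]; exact hRS)

lemma key_decomp (K : Finset (Finset α)) (hIC : InterClosed K)
    (hN : (univ : Finset α) ∈ K) (w : Finset α → ℝ) {S : Finset α} (hS : S ∈ K) :
    w S = ∑ R ∈ K.filter (fun T => T ⊆ S), ∑ T ∈ classOf K R, dividend w T := by
  rw [← sum_powerset_dividend w S, powerset_eq_biUnion K hIC hN hS]
  refine sum_biUnion ?_
  intro R1 hR1 R2 hR2 hne
  simp only [coe_filter, Set.mem_setOf_eq] at hR1 hR2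
  simp only [Finset.disjoint_left, classOf, mem_filter, mem_univ, true_and]
  intro X h1 h2
  exact hne (by rw [← cl_eq_self K hR1.1, ← cl_eq_self K hR2.1, ← h1, ← h2])

end AuxLemmas

/-- for a P-extendable intersection-closed game, a cooperative game `w`
is a P-extension iff all its dividends are nonnegative and for every `S ∈ K` the
dividends over the class `C(S)` sum to `Δ_v(S)`. -/
theorem pExtension_iff_class_sums (K : Finset (Finset α))
    (hIC : InterClosed K) (hempty : ∅ ∈ K) (hN : (Finset.univ : Finset α) ∈ K)
    (v : Finset α → ℝ) (hv : v ∅ = 0) (hext : PExtendable K v)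
    (w : Finset α → ℝ) (hw : w ∅ = 0) :
    PExtension K v w ↔
      ((∀ T : Finset α, 0 ≤ dividend w T) ∧
        ∀ S ∈ K, ∑ T ∈ classOf K S, dividend w T = Delta K v S) := by
  constructor
  · rintro ⟨-, hpos, hagree⟩
    refine ⟨hpos, ?_⟩
    intro S
    induction S using Finset.strongInduction with
    | _ S ih =>
      intro hS
      have h1 := key_decomp K hIC hN w hS
      rw [hagree S hS, filter_subset_eq_insert K hS,
        sum_insert (by simp [ssubset_irrefl])] at h1
      have h2 : ∀ R ∈ K.filter (fun T => T ⊂ S),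
          ∑ T ∈ classOf K R, dividend w T = Delta K v R := by
        intro R hR
        simp only [mem_filter] at hR
        exact ih R hR.2 hR.1
      rw [Finset.sum_congr rfl h2] at h1
      have h3 : Delta K v S = v S - ∑ T ∈ (K.filter fun T => T ⊂ S).attach, Delta K v T.1 := by
        rw [Delta]
      rw [Finset.sum_attach] at h3
      rw [h3]
      linarith
  · rintro ⟨hpos, hsum⟩
    refine ⟨hw, hpos, ?_⟩
    intro S hS
    rw [key_decomp K hIC hN w hS, ← sum_Delta K v hS]
    refine Finset.sum_congr rfl ?_
    intro R hR
    simp only [mem_filter] at hR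
    exact hsum R hR.1
end
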